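/- arXiv:1506.06633 — 2 statements merged into one kernel-verified Lean document; each statement's English description precedes it below -/
import Mathlib

section
/- For a finite two-player zero-sum game with payoff matrix A : X × Y → ℝ over finite nonempty sets X and Y, the maximum over mixed strategies p on X of the minimum over pure strategies y of the expected payoff equals the minimum over mixed strategies q on Y of the maximum over pure strategies x of the expected payoff. -/
open Finset

/-- A mixed strategy on a finite type `S`. -/
def IsMixed {S : Type*} [Fintype S] (p : S → ℝ) : Prop :=
  (∀ s, 0 ≤ p s) ∧ ∑ s, p s = 1

section aux

variable {X Y : Type*} [Fintype X] [Fintype Y] [Nonempty X] [Nonempty Y]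

private lemma fin_ciInf_le (g : Y → ℝ) (y : Y) : (⨅ j, g j) ≤ g y :=
  ciInf_le (Set.finite_range g).bddBelow y

private lemma fin_le_ciSup (g : X → ℝ) (x : X) : g x ≤ ⨆ j, g j :=
  le_ciSup (Set.finite_range g).bddAbove x

/-- Weak duality. -/
private lemma weak_duality (A : X → Y → ℝ) (p : X → ℝ) (q : Y → ℝ)
    (hp : IsMixed p) (hq : IsMixed q) :
    (⨅ y : Y, ∑ x, p x * A x y) ≤ ⨆ x : X, ∑ y, q y * A x y := by
  have h1 : (⨅ y : Y, ∑ x, p x * A x y) ≤ ∑ y, q y * ∑ x, p x * A x y := by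
    calc (⨅ y : Y, ∑ x, p x * A x y) = ∑ y, q y * (⨅ y : Y, ∑ x, p x * A x y) := by
          rw [← Finset.sum_mul, hq.2, one_mul]
      _ ≤ ∑ y, q y * ∑ x, p x * A x y := by
          apply Finset.sum_le_sum
          intro y _
          exact mul_le_mul_of_nonneg_left (fin_ciInf_le _ y) (hq.1 y)
  have h2 : ∑ y, q y * ∑ x, p x * A x y = ∑ x, p x * ∑ y, q y * A x y := by
    simp_rw [Finset.mul_sum]
    rw [Finset.sum_comm]
    congr 1; ext x; congr 1; ext y; ring
  have h3 : ∑ x, p x * ∑ y, q y * A x y ≤ ⨆ x : X, ∑ y, q y * A x y := by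
    calc ∑ x, p x * ∑ y, q y * A x y
        ≤ ∑ x, p x * (⨆ x : X, ∑ y, q y * A x y) := by
          apply Finset.sum_le_sum
          intro x _
          exact mul_le_mul_of_nonneg_left
            (fin_le_ciSup (fun x => ∑ y, q y * A x y) x) (hp.1 x)
      _ = ⨆ x : X, ∑ y, q y * A x y := by rw [← Finset.sum_mul, hp.2, one_mul]
  linarith

end aux

/-- von Neumann's min-max theorem for finite two-player zero-sum games:
the max over mixed strategies on `X` of the min over pure `y` of the expected payoff
equals the min over mixed strategies on `Y` of the max over pure `x`. -/
theorem minmax_finite_games {X Y : Type*} [Fintype X] [Fintype Y]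
    [Nonempty X] [Nonempty Y] (A : X → Y → ℝ) :
    sSup {v : ℝ | ∃ p : X → ℝ, IsMixed p ∧ v = ⨅ y : Y, ∑ x, p x * A x y} =
    sInf {v : ℝ | ∃ q : Y → ℝ, IsMixed q ∧ v = ⨆ x : X, ∑ y, q y * A x y} := by
  classical
  set S := {v : ℝ | ∃ p : X → ℝ, IsMixed p ∧ v = ⨅ y : Y, ∑ x, p x * A x y} with hS
  set T := {v : ℝ | ∃ q : Y → ℝ, IsMixed q ∧ v = ⨆ x : X, ∑ y, q y * A x y} with hT
  -- uniform strategies show nonemptiness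
  have hunifX : IsMixed (fun _ : X => (Fintype.card X : ℝ)⁻¹) := by
    constructor
    · intro x; positivity
    · rw [Finset.sum_const, Finset.card_univ, nsmul_eq_mul]
      field_simp
  have hunifY : IsMixed (fun _ : Y => (Fintype.card Y : ℝ)⁻¹) := by
    constructor
    · intro y; positivity
    · rw [Finset.sum_const, Finset.card_univ, nsmul_eq_mul]
      field_simp
  have hSne : S.Nonempty := ⟨_, _, hunifX, rfl⟩
  have hTne : T.Nonempty := ⟨_, _, hunifY, rfl⟩
  -- weak duality: every element of S is ≤ every element of T
  have hweak : ∀ s ∈ S, ∀ t ∈ T, s ≤ t := by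
    rintro s ⟨p, hp, rfl⟩ t ⟨q, hq, rfl⟩
    exact weak_duality A p q hp hq
  obtain ⟨t₀, ht₀⟩ := hTne
  have hSbdd : BddAbove S := ⟨t₀, fun s hs => hweak s hs t₀ ht₀⟩
  obtain ⟨s₀, hs₀⟩ := hSne
  have hTbdd : BddBelow T := ⟨s₀, fun t ht => hweak s₀ hs₀ t ht⟩
  have hle : sSup S ≤ sInf T :=
    csSup_le ⟨s₀, hs₀⟩ fun s hs => le_csInf ⟨t₀, ht₀⟩ fun t ht => hweak s hs t ht
  refine le_antisymm hle ?_
  -- strong duality via Hahn-Banach separation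
  set v := sInf T with hv
  -- the convex set of expected-payoff vectors achievable by mixed q
  set K : Set (X → ℝ) := {z | ∃ q : Y → ℝ, IsMixed q ∧ ∀ x, z x = ∑ y, q y * A x y} with hK
  set U : Set (X → ℝ) := {z | ∀ x, z x < v} with hU
  have hKconv : Convex ℝ K := by
    rintro z1 ⟨q1, hq1, h1⟩ z2 ⟨q2, hq2, h2⟩ a b ha hb hab
    refine ⟨fun y => a * q1 y + b * q2 y,
      ⟨fun y => add_nonneg (mul_nonneg ha (hq1.1 y)) (mul_nonneg hb (hq2.1 y)), ?_⟩, fun x => ?_⟩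
    · rw [Finset.sum_add_distrib, ← Finset.mul_sum, ← Finset.mul_sum, hq1.2, hq2.2]
      linarith
    · simp only [Pi.add_apply, Pi.smul_apply, smul_eq_mul, h1 x, h2 x]
      rw [Finset.mul_sum, Finset.mul_sum, ← Finset.sum_add_distrib]
      congr 1; ext y; ring
  have hUconv : Convex ℝ U := by
    have : U = ⋂ x, {z : X → ℝ | z x < v} := by ext z; simp [hU]
    rw [this]
    exact convex_iInter fun x =>
      convex_halfSpace_lt ⟨fun _ _ => rfl, fun _ _ => rfl⟩ v
  have hUopen : IsOpen U := by
    have : U = ⋂ x, (fun z : X → ℝ => z x) ⁻¹' Set.Iio v := by ext z; simp [hU]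
    rw [this]
    exact isOpen_iInter_of_finite fun x => (isOpen_Iio).preimage (continuous_apply x)
  have hdisj : Disjoint U K := by
    rw [Set.disjoint_left]
    rintro z hzU ⟨q, hq, hz⟩
    have hmem : (⨆ x : X, ∑ y, q y * A x y) ∈ T := ⟨q, hq, rfl⟩
    have h1 : v ≤ ⨆ x : X, ∑ y, q y * A x y := csInf_le hTbdd hmem
    obtain ⟨x₀, hx₀⟩ := exists_eq_ciSup_of_finite (f := fun x : X => ∑ y, q y * A x y)
    have h2 : (⨆ x : X, ∑ y, q y * A x y) < v := by
      rw [← hx₀, ← hz x₀]; exact hzU x₀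
    linarith
  obtain ⟨f, u, hfU, hfK⟩ := geometric_hahn_banach_open hUconv hUopen hKconv hdisj
  set c : X → ℝ := fun x => f (Pi.single x 1) with hc
  -- coordinate formula for f
  have hcoord : ∀ z : X → ℝ, f z = ∑ x, z x * c x := by
    intro z
    have hz : z = ∑ x, z x • (Pi.single x (1 : ℝ) : X → ℝ) := by
      funext j
      rw [Finset.sum_apply]
      simp [Pi.single_apply]
    conv_lhs => rw [hz]
    rw [map_sum]
    congr 1; ext x
    rw [map_smul]; rfl
  -- U is nonempty
  have hUne : (fun _ : X => v - 1) ∈ U := fun x => by simp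
  -- each c x ≥ 0
  have hcnn : ∀ x, 0 ≤ c x := by
    intro x
    by_contra hneg
    push_neg at hneg
    set B := f (fun _ : X => v - 1) with hB
    set t : ℝ := max 0 ((B - u) / c x) with ht
    have ht0 : 0 ≤ t := le_max_left _ _
    have hmem : ((fun _ : X => v - 1) - t • (Pi.single x 1 : X → ℝ)) ∈ U := by
      intro j
      simp only [Pi.sub_apply, Pi.smul_apply, smul_eq_mul]
      have : (0:ℝ) ≤ t * (Pi.single x (1:ℝ) : X → ℝ) j := by
        apply mul_nonneg ht0
        by_cases h : j = x <;> simp [Pi.single_apply, h]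
      linarith
    have hlt := hfU _ hmem
    rw [map_sub, map_smul] at hlt
    have hlt2 : B - t * c x < u := hlt
    have htc : t * c x ≤ B - u := by
      have h2 : (B - u) / c x ≤ t := le_max_right _ _
      calc t * c x ≤ ((B - u) / c x) * c x :=
            mul_le_mul_of_nonpos_right h2 (le_of_lt hneg)
        _ = B - u := div_mul_cancel₀ _ hneg.ne
    linarith [hlt2]
  -- sum of c is positive
  have hcsum : 0 < ∑ x, c x := by
    rcases lt_or_eq_of_le (Finset.sum_nonneg fun x _ => hcnn x) with h | h
    · exact h
    · exfalso
      have hall : ∀ x, c x = 0 := by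
        intro x
        have := (Finset.sum_eq_zero_iff_of_nonneg fun x _ => hcnn x).mp h.symm x (Finset.mem_univ x)
        exact this
      have hf0 : ∀ z, f z = 0 := by
        intro z; rw [hcoord]; simp [hall]
      have h1 := hfU _ hUne
      obtain ⟨kz, hkz⟩ : K.Nonempty := by
        refine ⟨fun x => ∑ y, (fun _ : Y => (Fintype.card Y : ℝ)⁻¹) y * A x y,
          (fun _ : Y => (Fintype.card Y : ℝ)⁻¹), hunifY, fun x => rfl⟩
      have h2 := hfK _ hkz
      rw [hf0] at h1 h2
      linarith
  -- v * ∑ c ≤ u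
  have hvu : v * ∑ x, c x ≤ u := by
    apply le_of_forall_sub_le
    intro ε hε
    have hmem : (fun _ : X => v - ε / ∑ x, c x) ∈ U := by
      intro x
      have : 0 < ε / ∑ x, c x := div_pos hε hcsum
      simp only
      linarith
    have := hfU _ hmem
    rw [hcoord] at this
    have heq : ∑ x, (v - ε / ∑ x, c x) * c x = v * (∑ x, c x) - ε := by
      rw [← Finset.mul_sum, sub_mul, div_mul_cancel₀ _ (ne_of_gt hcsum)]
    rw [heq] at this
    linarith
  -- the optimal mixed strategy p
  set p : X → ℝ := fun x => c x / ∑ x, c x with hp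
  have hpmix : IsMixed p := by
    constructor
    · intro x; exact div_nonneg (hcnn x) (le_of_lt hcsum)
    · rw [← Finset.sum_div]; field_simp
  have hpy : ∀ y, v ≤ ∑ x, p x * A x y := by
    intro y
    have hmem : (fun x => ∑ y', (fun y'' => if y'' = y then (1:ℝ) else 0) y' * A x y') ∈ K := by
      refine ⟨fun y'' => if y'' = y then (1:ℝ) else 0,
        ⟨fun y'' => by by_cases h : y'' = y <;> simp [h], by simp⟩, fun x => rfl⟩
    have h1 := hfK _ hmem
    rw [hcoord] at h1
    simp only [ite_mul, one_mul, zero_mul, Finset.sum_ite_eq', Finset.mem_univ, if_true] at h1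
    -- h1 : u ≤ ∑ x, A x y * c x
    have h2 : v * ∑ x, c x ≤ ∑ x, A x y * c x := le_trans hvu h1
    rw [← sub_nonneg] at h2 ⊢
    have heq : (∑ x, p x * A x y) - v
        = ((∑ x, A x y * c x) - v * ∑ x, c x) / ∑ x, c x := by
      rw [sub_div, Finset.sum_div, mul_div_cancel_right₀ v (ne_of_gt hcsum)]
      congr 1
      exact Finset.sum_congr rfl fun x _ => by rw [hp]; ring
    rw [heq]
    exact div_nonneg h2 (le_of_lt hcsum)
  have hfinal : v ≤ ⨅ y : Y, ∑ x, p x * A x y := le_ciInf hpy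
  have hmemS : (⨅ y : Y, ∑ x, p x * A x y) ∈ S := ⟨p, hpmix, rfl⟩
  exact le_trans hfinal (le_csSup hSbdd hmemS)
end

section
/- Let ν be a probability measure on a finite set X, let 𝒢 be a finite set of functions g : X → ℝ, and let ḡ = ∑_{g ∈ 𝒢} α_g g be a convex combination. Suppose K > 0 satisfies ‖ḡ − g‖_2 ≤ K for every g ∈ 𝒢, where ‖f‖_2 = (E_{x ← ν}|f(x)|^2)^{1/2}. Then for every positive integer ℓ there exist g_1, …, g_ℓ ∈ 𝒢 (with repetition allowed) such that ‖ḡ − (1/ℓ)∑_{i=1}^ℓ g_i‖_2 ≤ K/√ℓ. -/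
open Finset

/-! Sample `g₁, …, g_ℓ` independently from `α`. The errors `ḡ - gᵢ` are independent with mean
zero, so the cross terms of `E ‖∑ᵢ (ḡ - gᵢ)‖²` vanish and it equals `ℓ · E ‖ḡ - g‖² ≤ ℓ K²`;
hence some sample has `‖ḡ - ℓ⁻¹ ∑ᵢ gᵢ‖² ≤ K² / ℓ`. This works in any real inner product space,
and `f ↦ (√(ν x) f x)ₓ` realizes the `L²(ν)` seminorm as a Euclidean norm. -/

section

variable {ι : Type*} [Fintype ι]

lemma sum_pi_prod_eq_one {α : ι → ℝ} (hα1 : ∑ j, α j = 1) (n : ℕ) :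
    ∑ g : Fin n → ι, ∏ i, α (g i) = 1 := by
  rw [← Fintype.sum_pow, hα1, one_pow]

lemma sum_pi_succ_prod_mul (α : ι → ℝ) {n : ℕ} (F : (Fin (n + 1) → ι) → ℝ) :
    ∑ g : Fin (n + 1) → ι, (∏ i, α (g i)) * F g =
      ∑ j, ∑ g : Fin n → ι, α j * (∏ i, α (g i)) * F (Fin.cons j g) := by
  rw [← (Fin.consEquiv fun _ => ι).sum_comp, Fintype.sum_prod_type]
  simp only [Fin.prod_univ_succ]
  rfl

variable {E : Type*} [NormedAddCommGroup E] [InnerProductSpace ℝ E]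

theorem sum_pi_prod_mul_norm_sum_sq {α : ι → ℝ} (hα1 : ∑ j, α j = 1) {v : ι → E}
    (hv : ∑ j, α j • v j = 0) (n : ℕ) :
    ∑ g : Fin n → ι, (∏ i, α (g i)) * ‖∑ i, v (g i)‖ ^ 2 = n * ∑ j, α j * ‖v j‖ ^ 2 := by
  induction n with
  | zero => simp
  | succ n ih =>
    have hcross :
        ∑ j, ∑ g : Fin n → ι, α j * (∏ i, α (g i)) * inner ℝ (v j) (∑ i, v (g i)) = 0 := by
      calc _ = ∑ g : Fin n → ι, (∏ i, α (g i)) * inner ℝ (∑ j, α j • v j) (∑ i, v (g i)) := by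
            rw [sum_comm]
            refine sum_congr rfl fun g _ => ?_
            simp only [sum_inner, real_inner_smul_left, mul_sum]
            exact sum_congr rfl fun j _ => by ring
        _ = 0 := by simp [hv]
    calc ∑ g : Fin (n + 1) → ι, (∏ i, α (g i)) * ‖∑ i, v (g i)‖ ^ 2
        = ∑ j, ∑ g : Fin n → ι, α j * (∏ i, α (g i)) *
            (‖v j‖ ^ 2 + 2 * inner ℝ (v j) (∑ i, v (g i)) + ‖∑ i, v (g i)‖ ^ 2) := by
          simp only [sum_pi_succ_prod_mul, Fin.sum_univ_succ, Fin.cons_zero, Fin.cons_succ,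
            norm_add_sq_real]
      _ = ∑ j, α j * ‖v j‖ ^ 2 * ∑ g : Fin n → ι, ∏ i, α (g i)
            + 2 * ∑ j, ∑ g : Fin n → ι, α j * (∏ i, α (g i)) * inner ℝ (v j) (∑ i, v (g i))
            + ∑ j, α j * ∑ g : Fin n → ι, (∏ i, α (g i)) * ‖∑ i, v (g i)‖ ^ 2 := by
          simp only [mul_add, sum_add_distrib, mul_sum]
          congr 1; congr 1
          all_goals exact sum_congr rfl fun _ _ => sum_congr rfl fun _ _ => by ring
      _ = (n + 1 : ℕ) * ∑ j, α j * ‖v j‖ ^ 2 := by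
          simp only [sum_pi_prod_eq_one hα1, hcross, ih, mul_one, ← sum_mul, hα1]
          push_cast; ring

lemma exists_le_of_sum_mul_le {κ : Type*} [Fintype κ] {w F : κ → ℝ} {c : ℝ}
    (hw0 : ∀ k, 0 ≤ w k) (hw1 : ∑ k, w k = 1) (h : ∑ k, w k * F k ≤ c) : ∃ k, F k ≤ c := by
  have hne : (univ : Finset κ).Nonempty := nonempty_of_sum_ne_zero (by rw [hw1]; exact one_ne_zero)
  obtain ⟨k, -, hk⟩ := exists_mem_eq_inf' hne F
  refine ⟨k, hk ▸ ?_⟩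
  calc univ.inf' hne F ≤ univ.centerMass w F :=
        inf_le_centerMass (fun k _ => hw0 k) (by rw [hw1]; exact one_pos)
    _ = ∑ k, w k * F k := by simp [centerMass, hw1]
    _ ≤ c := h

theorem exists_norm_sub_inv_smul_sum_le {α : ι → ℝ} (hα0 : ∀ j, 0 ≤ α j) (hα1 : ∑ j, α j = 1)
    {u : ι → E} {K : ℝ} (hK : ∀ j, ‖∑ k, α k • u k - u j‖ ≤ K) {n : ℕ} (hn : 0 < n) :
    ∃ g : Fin n → ι, ‖∑ k, α k • u k - (n : ℝ)⁻¹ • ∑ i, u (g i)‖ ≤ K / √n := by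
  set v : ι → E := fun j => ∑ k, α k • u k - u j
  have hv : ∑ j, α j • v j = 0 := by
    simp only [v, smul_sub, sum_sub_distrib, ← sum_smul, hα1, one_smul, sub_self]
  have hn' : (n : ℝ) ≠ 0 := Nat.cast_ne_zero.2 hn.ne'
  have hdiff : ∀ g : Fin n → ι,
      ∑ k, α k • u k - (n : ℝ)⁻¹ • ∑ i, u (g i) = (n : ℝ)⁻¹ • ∑ i, v (g i) := by
    intro g
    simp only [v, sum_sub_distrib, sum_const, card_univ, Fintype.card_fin, smul_sub,
      ← Nat.cast_smul_eq_nsmul ℝ, smul_smul, inv_mul_cancel₀ hn', one_smul]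
  have hmoment : ∑ g : Fin n → ι, (∏ i, α (g i)) * ‖∑ i, v (g i)‖ ^ 2 ≤ n * K ^ 2 := by
    rw [sum_pi_prod_mul_norm_sum_sq hα1 hv]
    gcongr
    calc ∑ j, α j * ‖v j‖ ^ 2 ≤ ∑ j, α j * K ^ 2 := by
          gcongr with j
          exacts [hα0 j, hK j]
      _ = K ^ 2 := by rw [← sum_mul, hα1, one_mul]
  obtain ⟨g, hg⟩ := exists_le_of_sum_mul_le (fun g => prod_nonneg fun i _ => hα0 (g i))
    (sum_pi_prod_eq_one hα1 n) hmoment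
  have hK0 : 0 ≤ K := (norm_nonneg _).trans (hK (g ⟨0, hn⟩))
  refine ⟨g, (pow_le_pow_iff_left₀ (norm_nonneg _) (by positivity) two_ne_zero).1 ?_⟩
  rw [hdiff, norm_smul, mul_pow, div_pow, Real.sq_sqrt (Nat.cast_nonneg _), norm_inv,
    Real.norm_natCast]
  calc (n : ℝ)⁻¹ ^ 2 * ‖∑ i, v (g i)‖ ^ 2 ≤ (n : ℝ)⁻¹ ^ 2 * (n * K ^ 2) := by gcongr
    _ = K ^ 2 / n := by field_simp

end

noncomputable def sqrtWeightEmbedding {X : Type*} (ν : X → ℝ) :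
    (X → ℝ) →ₗ[ℝ] EuclideanSpace ℝ X where
  toFun f := WithLp.toLp 2 fun x => √(ν x) * f x
  map_add' f g := by ext x; simp [mul_add]
  map_smul' c f := by ext x; simp [mul_left_comm]

@[simp]
lemma sqrtWeightEmbedding_apply {X : Type*} (ν : X → ℝ) (f : X → ℝ) (x : X) :
    sqrtWeightEmbedding ν f x = √(ν x) * f x := rfl

lemma norm_sqrtWeightEmbedding {X : Type*} [Fintype X] {ν : X → ℝ} (hν : ∀ x, 0 ≤ ν x)
    (f : X → ℝ) : ‖sqrtWeightEmbedding ν f‖ = √(∑ x, ν x * f x ^ 2) := by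
  simp [EuclideanSpace.norm_eq, sqrtWeightEmbedding, mul_pow, Real.sq_sqrt (hν _)]

theorem maurey_L2_approx_general {X ι : Type*} [Fintype X] [Fintype ι]
    (ν : X → ℝ) (hν0 : ∀ x, 0 ≤ ν x)
    (G : ι → X → ℝ) (α : ι → ℝ) (hα0 : ∀ i, 0 ≤ α i) (hα1 : ∑ i, α i = 1)
    (K : ℝ)
    (hdist : ∀ i, Real.sqrt (∑ x, ν x * ((∑ j, α j * G j x) - G i x) ^ 2) ≤ K)
    (ℓ : ℕ) (hℓ : 0 < ℓ) :
    ∃ g : Fin ℓ → ι,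
      Real.sqrt (∑ x, ν x *
          ((∑ j, α j * G j x) - (ℓ : ℝ)⁻¹ * ∑ i, G (g i) x) ^ 2) ≤
        K / Real.sqrt ℓ := by
  set T := sqrtWeightEmbedding ν
  have hT : ∀ f, ‖T f‖ = √(∑ x, ν x * f x ^ 2) := norm_sqrtWeightEmbedding hν0
  have hmean : ∑ j, α j • T (G j) = T fun x => ∑ j, α j * G j x := by
    ext x
    simp [T, mul_sum, mul_left_comm]
  obtain ⟨g, hg⟩ := exists_norm_sub_inv_smul_sum_le hα0 hα1 (u := fun j => T (G j))
    (fun i => by rw [hmean, ← map_sub, hT]; exact hdist i) hℓ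
  refine ⟨g, ?_⟩
  have havg : (ℓ : ℝ)⁻¹ • ∑ i, T (G (g i)) = T fun x => (ℓ : ℝ)⁻¹ * ∑ i, G (g i) x := by
    ext x
    simp [T, mul_sum, mul_left_comm]
  rwa [hmean, havg, ← map_sub, hT] at hg

/-- Maurey–Jones–Barron approximate Carathéodory theorem in `L²(ν)` on a finite
probability space: a convex combination `ḡ = ∑ α_g · g` of functions from a
finite family, each within `L²` distance `K` of `ḡ`, admits for every `ℓ ≥ 1`
an `ℓ`-term average approximation with error at most `K/√ℓ`. -/
theorem maurey_L2_approx {X ι : Type*} [Fintype X] [Fintype ι] [Nonempty ι]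
    (ν : X → ℝ) (hν0 : ∀ x, 0 ≤ ν x) (hν1 : ∑ x, ν x = 1)
    (G : ι → X → ℝ) (α : ι → ℝ) (hα0 : ∀ i, 0 ≤ α i) (hα1 : ∑ i, α i = 1)
    (K : ℝ) (hK : 0 < K)
    (hdist : ∀ i, Real.sqrt (∑ x, ν x * ((∑ j, α j * G j x) - G i x) ^ 2) ≤ K)
    (ℓ : ℕ) (hℓ : 0 < ℓ) :
    ∃ g : Fin ℓ → ι,
      Real.sqrt (∑ x, ν x *
          ((∑ j, α j * G j x) - (ℓ : ℝ)⁻¹ * ∑ i, G (g i) x) ^ 2) ≤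
        K / Real.sqrt ℓ :=
  maurey_L2_approx_general ν hν0 G α hα0 hα1 K hdist ℓ hℓ
end
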